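/- Modus tollens: for events A, C with P(A) > 0, setting x := P(C|A), the conjunction satisfies X(ω) = x·1_{Aᶜ∩Cᶜ}(ω) for every ω ∈ Ω; moreover, if x > 0 and P(Aᶜ∩Cᶜ) > 0, then the iterated conditional satisfies ⟦(Aᶜ|Ω)|((C|A)∧(Cᶜ|Ω))⟧(ω) = 1 for every ω ∈ Ω. -/

import Mathlib

open MeasureTheory Set
open scoped Classical

noncomputable section

variable {Ω : Type*} [MeasurableSpace Ω]

/-- Indicator (with values in `ℝ`) of a set. -/
def ind (A : Set Ω) : Ω → ℝ := A.indicator 1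

/-- Conditional probability `P(A|H) = P(A ∩ H)/P(H)`. -/
def condProb (P : Measure Ω) (A H : Set Ω) : ℝ :=
  (P (A ∩ H)).toReal / (P H).toReal

/-- The (indicator of the) conditional event `A|H`,
`⟦A|H⟧ = 1_{A∩H} + P(A|H)·1_{Hᶜ}`. -/
def condEvent (P : Measure Ω) (A H : Set Ω) : Ω → ℝ :=
  fun ω => ind (A ∩ H) ω + condProb P A H * ind Hᶜ ω

/-- The prevision `z` of the conjunction `(A|H) ∧ (B|K)`:
`z = E[min(⟦A|H⟧, ⟦B|K⟧)·1_{H∪K}]/P(H∪K)`. -/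
def conjPrev (P : Measure Ω) (A H B K : Set Ω) : ℝ :=
  (∫ ω, min (condEvent P A H ω) (condEvent P B K ω) * ind (H ∪ K) ω ∂P) /
    (P (H ∪ K)).toReal

/-- The conjunction `⟦(A|H) ∧ (B|K)⟧ = min(⟦A|H⟧, ⟦B|K⟧)·1_{H∪K} + z·1_{(H∪K)ᶜ}`. -/
def conjCE (P : Measure Ω) (A H B K : Set Ω) : Ω → ℝ :=
  fun ω => min (condEvent P A H ω) (condEvent P B K ω) * ind (H ∪ K) ω
    + conjPrev P A H B K * ind (H ∪ K)ᶜ ω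

/-- The iterated conditional `⟦(B|K)|(A|H)⟧ = ⟦(A|H)∧(B|K)⟧ + μ·(1 − ⟦A|H⟧)`,
with `μ = z / P(A|H)`. -/
def iterCond (P : Measure Ω) (A H B K : Set Ω) : Ω → ℝ :=
  fun ω => conjCE P A H B K ω +
    (conjPrev P A H B K / condProb P A H) * (1 - condEvent P A H ω)

/-- Goodman–Nguyen logical implication between conditional events:
`A|H ⊑ B|K` iff `A∩H ⊆ B∩K` and `Bᶜ∩K ⊆ Aᶜ∩H`. -/
def GNle (A H B K : Set Ω) : Prop := A ∩ H ⊆ B ∩ K ∧ Bᶜ ∩ K ⊆ Aᶜ ∩ H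

/-- Modus tollens: the triple conjunction `T = min(1_{Aᶜ}, ⟦C|A⟧, 1_{Cᶜ})`
(the union of the conditioning events is `Ω`). -/
def mtT (P : Measure Ω) (A C : Set Ω) : Ω → ℝ :=
  fun ω => min (ind Aᶜ ω) (min (condEvent P C A ω) (ind Cᶜ ω))

/-- Modus tollens: the iterated conditional `⟦(Aᶜ|Ω)|((C|A)∧(Cᶜ|Ω))⟧
= T + (E[T]/E[X])·(1 − X)` where `X = ⟦(C|A)∧(Cᶜ|Ω)⟧`. -/
def mtIter (P : Measure Ω) (A C : Set Ω) : Ω → ℝ :=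
  fun ω => mtT P A C ω +
    ((∫ ω', mtT P A C ω' ∂P) / (∫ ω', conjCE P C A Cᶜ Set.univ ω' ∂P)) *
      (1 - conjCE P C A Cᶜ Set.univ ω)

/-! Off `A` the conditional event `C|A` is the constant `x = P(C|A) ∈ [0, 1]`, on `A` it is `1_C`.
Hence both the conjunction `X` with `Cᶜ` and the triple conjunction `T` reduce to
`x·1_{Aᶜ∩Cᶜ}`. With `T = X`, the iterated conditional `T + (E[T]/E[X])·(1 − X)` collapses to `1`
as soon as `E[X] = x·P(Aᶜ∩Cᶜ)` is nonzero. -/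

theorem ind_of_mem {α : Type*} {A : Set α} {a : α} (h : a ∈ A) : ind A a = 1 := by
  simp [ind, h]

theorem ind_of_notMem {α : Type*} {A : Set α} {a : α} (h : a ∉ A) : ind A a = 0 := by
  simp [ind, h]

section
variable (P : Measure Ω)

theorem integral_ind {S : Set Ω} (hS : MeasurableSet S) : ∫ ω, ind S ω ∂P = P.real S :=
  integral_indicator_one hS

theorem condProb_nonneg (A H : Set Ω) : 0 ≤ condProb P A H := by
  unfold condProb; positivity

theorem condProb_le_one [IsFiniteMeasure P] (A H : Set Ω) : condProb P A H ≤ 1 :=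
  div_le_one_of_le₀ (ENNReal.toReal_mono (measure_ne_top P H) (measure_mono inter_subset_right))
    ENNReal.toReal_nonneg

theorem condEvent_of_mem {A H : Set Ω} {ω : Ω} (h : ω ∈ H) : condEvent P A H ω = ind A ω := by
  by_cases hA : ω ∈ A <;> simp [condEvent, ind_of_mem, ind_of_notMem, h, hA]

theorem condEvent_of_notMem {A H : Set Ω} {ω : Ω} (h : ω ∉ H) :
    condEvent P A H ω = condProb P A H := by
  simp [condEvent, ind_of_mem, ind_of_notMem, h]

theorem conjCE_univ_right (A H B : Set Ω) (ω : Ω) :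
    conjCE P A H B univ ω = min (condEvent P A H ω) (ind B ω) := by
  simp [conjCE, condEvent_of_mem, ind_of_mem, ind_of_notMem]

theorem conjCE_compl_univ [IsFiniteMeasure P] (A H : Set Ω) (ω : Ω) :
    conjCE P A H Aᶜ univ ω = condProb P A H * ind (Hᶜ ∩ Aᶜ) ω := by
  rw [conjCE_univ_right]
  by_cases hH : ω ∈ H
  · by_cases hA : ω ∈ A <;> simp [condEvent_of_mem P hH, ind_of_mem, ind_of_notMem, hH, hA]
  · by_cases hA : ω ∈ A
    · simp [condEvent_of_notMem P hH, ind_of_notMem, hA, condProb_nonneg]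
    · simp [condEvent_of_notMem P hH, ind_of_mem, hH, hA, condProb_le_one]

theorem mtT_eq_conjCE [IsFiniteMeasure P] (A C : Set Ω) :
    mtT P A C = conjCE P C A Cᶜ univ := by
  funext ω
  rw [mtT, ← conjCE_univ_right, conjCE_compl_univ]
  by_cases hA : ω ∈ A
  · simp [ind_of_notMem, hA]
  · by_cases hC : ω ∈ C
    · simp [ind_of_mem, ind_of_notMem, hA, hC]
    · simp [ind_of_mem, hA, hC, condProb_le_one]

theorem mtIter_eq_one [IsFiniteMeasure P] (A C : Set Ω)
    (hX : ∫ ω, conjCE P C A Cᶜ univ ω ∂P ≠ 0) (ω : Ω) : mtIter P A C ω = 1 := by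
  simp only [mtIter, mtT_eq_conjCE, div_self hX]
  ring

end

theorem modus_tollens_general (P : Measure Ω) [IsProbabilityMeasure P]
    (A C : Set Ω) (hAm : MeasurableSet A) (hCm : MeasurableSet C) :
    (∀ ω, conjCE P C A Cᶜ Set.univ ω = condProb P C A * ind (Aᶜ ∩ Cᶜ) ω) ∧
      (0 < condProb P C A → 0 < P (Aᶜ ∩ Cᶜ) → ∀ ω, mtIter P A C ω = 1) := by
  have hX := conjCE_compl_univ P C A
  refine ⟨hX, fun hx hS => mtIter_eq_one P A C ?_⟩
  rw [integral_congr_ae (ae_of_all _ hX), integral_const_mul,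
    integral_ind P (hAm.compl.inter hCm.compl)]
  exact (mul_pos hx (ENNReal.toReal_pos hS.ne' (measure_ne_top P _))).ne'

/-- Modus tollens: with `x = P(C|A)`, the conjunction
`X = ⟦(C|A)∧(Cᶜ|Ω)⟧` equals `x·1_{Aᶜ∩Cᶜ}` pointwise; moreover, if `x > 0` and
`P(Aᶜ∩Cᶜ) > 0`, then `⟦(Aᶜ|Ω)|((C|A)∧(Cᶜ|Ω))⟧` is constantly `1`. -/
theorem modus_tollens (P : Measure Ω) [IsProbabilityMeasure P]
    (A C : Set Ω) (hAm : MeasurableSet A) (hCm : MeasurableSet C)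
    (hA : 0 < P A) :
    (∀ ω, conjCE P C A Cᶜ Set.univ ω = condProb P C A * ind (Aᶜ ∩ Cᶜ) ω) ∧
      (0 < condProb P C A → 0 < P (Aᶜ ∩ Cᶜ) → ∀ ω, mtIter P A C ω = 1) :=
  modus_tollens_general P A C hAm hCm

end
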